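/- arXiv:2406.00350 — 4 statements merged into one kernel-verified Lean document; each statement's English description precedes it below -/
import Mathlib

section
/- Let C2⊥ ⊆ C4⊥ be subspaces of F_2^n, let A be a k×n binary matrix whose rows are coset representatives defining C1 = C2⊥ + rowspace(A), and set C3 = C4⊥ + rowspace(A). For all ψ^A, ψ^B ∈ F_2^k, the identity Σ_{y∈C2⊥, z∈C4⊥} |ψ^A A + y⟩ ⊗ |ψ^A A + ψ^B A + y + z⟩ = |C2⊥| · Σ_{y∈C2⊥} Σ_{z'∈C4⊥} (1/|C2⊥|) |ψ^A A + y⟩ ⊗ |(ψ^A + ψ^B)A + z'⟩ holds in the free ℚ-module on F_2^n × F_2^n. -/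
open Matrix

/-!
Transversal CNOT sends `|ψA A + y⟩ ⊗ |ψB A + z⟩` to `|ψA A + y⟩ ⊗ |(ψA + ψB) A + y + z⟩`.
Since `y ∈ C2⊥ ⊆ C4⊥`, the shift `z ↦ y + z` permutes `C4⊥`, so for each fixed `y` the sum over `z`
is already the codeword superposition of the logical state `ψA + ψB`; the factor `|C2⊥|` cancels
against the normalisation `1 / |C2⊥|`.
-/

theorem finsum_mem_comp_add_left_of_mem {G M S : Type*} [AddGroup G] [AddCommMonoid M]
    [SetLike S G] [AddSubgroupClass S G] {H : S} {y : G} (hy : y ∈ H) (f : G → M) :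
    ∑ᶠ z ∈ (H : Set G), f (y + z) = ∑ᶠ z ∈ (H : Set G), f z := by
  rw [← finsum_set_coe_eq_finsum_mem, ← finsum_set_coe_eq_finsum_mem]
  exact finsum_comp_equiv (Equiv.addLeft (⟨y, hy⟩ : H)) (f := fun z : H => f z)

theorem transversal_cnot_is_logical_cnot_general {n k : ℕ}
    (C2perp C4perp : Submodule (ZMod 2) (Fin n → ZMod 2))
    (A : Matrix (Fin k) (Fin n) (ZMod 2))
    (hsub : C2perp ≤ C4perp)
    (ψA ψB : Fin k → ZMod 2) :
    (∑ᶠ y ∈ (C2perp : Set (Fin n → ZMod 2)), ∑ᶠ z ∈ (C4perp : Set (Fin n → ZMod 2)),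
        Finsupp.single ((ψA ᵥ* A + y, ψA ᵥ* A + ψB ᵥ* A + y + z) :
          (Fin n → ZMod 2) × (Fin n → ZMod 2)) (1 : ℚ)) =
    (Nat.card C2perp) •
      ∑ᶠ y ∈ (C2perp : Set (Fin n → ZMod 2)), ∑ᶠ z' ∈ (C4perp : Set (Fin n → ZMod 2)),
        ((Nat.card C2perp : ℚ)⁻¹) •
          Finsupp.single ((ψA ᵥ* A + y, (ψA + ψB) ᵥ* A + z') :
            (Fin n → ZMod 2) × (Fin n → ZMod 2)) (1 : ℚ) := by
  have hcard : (Nat.card C2perp : ℚ) ≠ 0 := Nat.cast_ne_zero.2 Nat.card_pos.ne'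
  simp_rw [← smul_finsum]
  rw [← Nat.cast_smul_eq_nsmul ℚ, smul_inv_smul₀ hcard]
  refine finsum_mem_congr rfl fun y hy => ?_
  conv_rhs => rw [← finsum_mem_comp_add_left_of_mem (hsub hy)]
  exact finsum_mem_congr rfl fun z _ => by rw [add_vecMul, add_assoc _ y]

/-- with `C2perp ⊆ C4perp` and the same coset-representative matrix `A` for both
codes, the transversal physical CNOT output equals the encoding of the logical CNOT output. -/
theorem transversal_cnot_is_logical_cnot {n k : ℕ}
    (C1 C2perp C3 C4perp : Submodule (ZMod 2) (Fin n → ZMod 2))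
    (A : Matrix (Fin k) (Fin n) (ZMod 2))
    (hsub : C2perp ≤ C4perp)
    (h1 : C1 = C2perp ⊔ Submodule.span (ZMod 2) (Set.range (fun i => A i)))
    (h3 : C3 = C4perp ⊔ Submodule.span (ZMod 2) (Set.range (fun i => A i)))
    (ψA ψB : Fin k → ZMod 2) :
    (∑ᶠ y ∈ (C2perp : Set (Fin n → ZMod 2)), ∑ᶠ z ∈ (C4perp : Set (Fin n → ZMod 2)),
        Finsupp.single ((ψA ᵥ* A + y, ψA ᵥ* A + ψB ᵥ* A + y + z) :
          (Fin n → ZMod 2) × (Fin n → ZMod 2)) (1 : ℚ)) =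
    (Nat.card C2perp) •
      ∑ᶠ y ∈ (C2perp : Set (Fin n → ZMod 2)), ∑ᶠ z' ∈ (C4perp : Set (Fin n → ZMod 2)),
        ((Nat.card C2perp : ℚ)⁻¹) •
          Finsupp.single ((ψA ᵥ* A + y, (ψA + ψB) ᵥ* A + z') :
            (Fin n → ZMod 2) × (Fin n → ZMod 2)) (1 : ℚ) :=
  transversal_cnot_is_logical_cnot_general C2perp C4perp A hsub ψA ψB
end

section
/- Let C2⊥, C4⊥ ⊆ F_2^n be linear codes and A, B be k×n binary matrices of rank k (coset representatives for CSS codes in stations A and B). Suppose (ψ^A A)·z + y·(ψ^B B + z) = 0 in F_2 for all ψ^A, ψ^B ∈ F_2^k, y ∈ C2⊥, z ∈ C4⊥, and A Bᵀ = I_k. Then for all ψ^A, ψ^B, y, z: (−1)^{(ψ^A A + y)·(ψ^B B + z)} = (−1)^{ψ^A · ψ^B}, i.e., the physical transversal CZ phase equals the logical CZ phase. -/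
open Matrix

theorem vecMul_dotProduct_vecMul_of_mul_transpose_eq_one {R m n : Type*} [CommSemiring R]
    [Fintype m] [Fintype n] [DecidableEq m] {A B : Matrix m n R} (hAB : A * Bᵀ = 1)
    (u v : m → R) : (u ᵥ* A) ⬝ᵥ (v ᵥ* B) = u ⬝ᵥ v := by
  rw [← mulVec_transpose B, dotProduct_mulVec, vecMul_vecMul, hAB, vecMul_one]

theorem add_dotProduct_add_eq_of_cross_eq_zero {R n : Type*} [CommSemiring R] [Fintype n]
    {a b y z : n → R} (hcross : a ⬝ᵥ z + y ⬝ᵥ (b + z) = 0) :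
    (a + y) ⬝ᵥ (b + z) = a ⬝ᵥ b := by
  calc (a + y) ⬝ᵥ (b + z) = a ⬝ᵥ b + (a ⬝ᵥ z + y ⬝ᵥ (b + z)) := by
        simp only [add_dotProduct, dotProduct_add]; ring
    _ = a ⬝ᵥ b := by rw [hcross, add_zero]

theorem cz_phase_of_conditions_general {n k : ℕ}
    (C2perp C4perp : Submodule (ZMod 2) (Fin n → ZMod 2))
    (A B : Matrix (Fin k) (Fin n) (ZMod 2))
    (hcond : ∀ (ψA ψB : Fin k → ZMod 2), ∀ y ∈ C2perp, ∀ z ∈ C4perp,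
      (ψA ᵥ* A) ⬝ᵥ z + y ⬝ᵥ (ψB ᵥ* B + z) = 0)
    (hAB : A * B.transpose = 1) :
    ∀ (ψA ψB : Fin k → ZMod 2), ∀ y ∈ C2perp, ∀ z ∈ C4perp,
      ((-1 : ℚ) ^ (((ψA ᵥ* A + y) ⬝ᵥ (ψB ᵥ* B + z)).val)) =
      ((-1 : ℚ) ^ ((ψA ⬝ᵥ ψB).val)) := by
  intro ψA ψB y hy z hz
  rw [add_dotProduct_add_eq_of_cross_eq_zero (hcond ψA ψB y hy z hz),
    vecMul_dotProduct_vecMul_of_mul_transpose_eq_one hAB]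

/-- sufficiency direction of the CZ-transversality theorem: if the bilinear
condition (14) holds and `A * Bᵀ = I`, then the physical CZ phase equals the logical CZ phase. -/
theorem cz_phase_of_conditions {n k : ℕ}
    (C2perp C4perp : Submodule (ZMod 2) (Fin n → ZMod 2))
    (A B : Matrix (Fin k) (Fin n) (ZMod 2))
    (hA : LinearIndependent (ZMod 2) (fun i => A i))
    (hB : LinearIndependent (ZMod 2) (fun i => B i))
    (hcond : ∀ (ψA ψB : Fin k → ZMod 2), ∀ y ∈ C2perp, ∀ z ∈ C4perp,
      (ψA ᵥ* A) ⬝ᵥ z + y ⬝ᵥ (ψB ᵥ* B + z) = 0)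
    (hAB : A * B.transpose = 1) :
    ∀ (ψA ψB : Fin k → ZMod 2), ∀ y ∈ C2perp, ∀ z ∈ C4perp,
      ((-1 : ℚ) ^ (((ψA ᵥ* A + y) ⬝ᵥ (ψB ᵥ* B + z)).val)) =
      ((-1 : ℚ) ^ ((ψA ⬝ᵥ ψB).val)) :=
  cz_phase_of_conditions_general C2perp C4perp A B hcond hAB
end

section
/- Let C1, C2, C3, C4 be binary linear codes of length n with C2⊥ ⊆ C1, C4⊥ ⊆ C3, and coset-representative matrices A (for C1/C2⊥) and B (for C3/C4⊥). If every row of A is orthogonal to C4⊥ (i.e. rowspace(A) ⊆ C4), C3 ⊆ C2, and ABᵀ = I_k, then for all ψ^A, ψ^B ∈ F_2^k, y ∈ C2⊥, z ∈ C4⊥ we have (ψ^A A)·z + y·(ψ^B B + z) = 0, so the pair of CSS codes is CZ-transversal. -/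
open Matrix

/-- The dual code of a binary linear code, w.r.t. the standard bilinear form. -/
def dualCode {n : ℕ} (S : Submodule (ZMod 2) (Fin n → ZMod 2)) :
    Submodule (ZMod 2) (Fin n → ZMod 2) where
  carrier := {v | ∀ u ∈ S, u ⬝ᵥ v = 0}
  add_mem' := by
    intro a b ha hb u hu
    simp [dotProduct_add, ha u hu, hb u hu]
  zero_mem' := by intro u hu; simp
  smul_mem' := by
    intro c a ha u hu
    simp [dotProduct_smul, ha u hu]

section

variable {R m n : Type*} [CommSemiring R] [Fintype m]

theorem Matrix.vecMul_dotProduct_eq_zero_of_rows [Fintype n] {A : Matrix m n R} {z : n → R}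
    (hA : ∀ i, A i ⬝ᵥ z = 0) (v : m → R) : (v ᵥ* A) ⬝ᵥ z = 0 := by
  have hAz : A *ᵥ z = 0 := funext hA
  rw [← dotProduct_mulVec, hAz, dotProduct_zero]

theorem Matrix.vecMul_mem_span_range (B : Matrix m n R) (v : m → R) :
    v ᵥ* B ∈ Submodule.span R (Set.range fun i => B i) :=
  (range_vecMulLinear B).le (LinearMap.mem_range_self _ v)

end

theorem cz_transversal_sufficient_first_general {n k : ℕ}
    (C2perp C3 C4perp : Submodule (ZMod 2) (Fin n → ZMod 2))
    (A B : Matrix (Fin k) (Fin n) (ZMod 2))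
    (h3 : C3 = C4perp ⊔ Submodule.span (ZMod 2) (Set.range (fun i => B i)))
    (hArows : ∀ i : Fin k, ∀ z ∈ C4perp, A i ⬝ᵥ z = 0)
    (hC3C2 : C3 ≤ dualCode C2perp) :
    ∀ (ψA ψB : Fin k → ZMod 2), ∀ y ∈ C2perp, ∀ z ∈ C4perp,
      (ψA ᵥ* A) ⬝ᵥ z + y ⬝ᵥ (ψB ᵥ* B + z) = 0 := by
  intro ψA ψB y hy z hz
  have hA : (ψA ᵥ* A) ⬝ᵥ z = 0 := vecMul_dotProduct_eq_zero_of_rows (fun i => hArows i z hz) ψA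
  have hC3 : ψB ᵥ* B + z ∈ C3 := by
    rw [h3]
    exact add_mem (Submodule.mem_sup_right (vecMul_mem_span_range B ψB))
      (Submodule.mem_sup_left hz)
  rw [hA, hC3C2 hC3 y hy, add_zero]

/-- sufficiency condition (18) of Corollary 1: if the rows of `A` are orthogonal
to `C4perp`, `C3 ⊆ C2`, and `A * Bᵀ = I`, then the CZ phase condition holds. -/
theorem cz_transversal_sufficient_first {n k : ℕ}
    (C1 C2perp C3 C4perp : Submodule (ZMod 2) (Fin n → ZMod 2))
    (A B : Matrix (Fin k) (Fin n) (ZMod 2))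
    (h21 : C2perp ≤ C1) (h43 : C4perp ≤ C3)
    (h1 : C1 = C2perp ⊔ Submodule.span (ZMod 2) (Set.range (fun i => A i)))
    (h3 : C3 = C4perp ⊔ Submodule.span (ZMod 2) (Set.range (fun i => B i)))
    (hArows : ∀ i : Fin k, ∀ z ∈ C4perp, A i ⬝ᵥ z = 0)
    (hC3C2 : C3 ≤ dualCode C2perp)
    (hAB : A * B.transpose = 1) :
    ∀ (ψA ψB : Fin k → ZMod 2), ∀ y ∈ C2perp, ∀ z ∈ C4perp,
      (ψA ᵥ* A) ⬝ᵥ z + y ⬝ᵥ (ψB ᵥ* B + z) = 0 :=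
  cz_transversal_sufficient_first_general C2perp C3 C4perp A B h3 hArows hC3C2
end

section
/- Let C2⊥ ⊆ C1 ⊆ F_2^n with dim C1 − dim C2⊥ = k, let the mirrored codes be C4⊥ = C1⊥ and C3 = C2, and let A and B be k×n matrices of rank k such that C1 = C2⊥ ⊕ rowspace(A) and C3 = C4⊥ ⊕ rowspace(B). Then the k×k matrix U = A Bᵀ over F_2 is invertible. -/
open Matrix

/-! Dualizing `C₂⊥⊥ = C₁⊥ ⊕ rowspace(B)` gives `C₂⊥ = C₁ ∩ rowspace(B)⊥`. A combination of rows
of `A` killed by `Bᵀ` therefore lies in `C₂⊥ ∩ rowspace(A) = 0`, so the rows of `A Bᵀ` are linearly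
independent. -/

namespace Matrix

variable {K m n : Type*} [Field K] [Fintype n]

theorem dotProductBilin_nondegenerate :
    (dotProductBilin K K : LinearMap.BilinForm K (n → K)).Nondegenerate :=
  ⟨dotProduct_eq_zero,
    fun w hw => dotProduct_eq_zero w fun v => dotProduct_comm w v ▸ hw v⟩

theorem dotProductBilin_isRefl :
    LinearMap.BilinForm.IsRefl (dotProductBilin K K : LinearMap.BilinForm K (n → K)) :=
  fun v w h => by simpa [dotProduct_comm] using h

theorem isUnit_mul_transpose_of_disjoint [Fintype m] [DecidableEq m] {A B : Matrix m n K}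
    (hA : LinearIndependent K A.row)
    (hAB : Disjoint (Submodule.span K (Set.range A.row)) (LinearMap.ker B.mulVecLin)) :
    IsUnit (A * Bᵀ) := by
  have hrows : (A * Bᵀ).row = B.mulVecLin ∘ A.row :=
    funext fun i => vecMul_transpose B (A i)
  rw [← linearIndependent_rows_iff_isUnit, hrows]
  exact hA.map hAB

end Matrix

section DualCode

variable {n : ℕ}

theorem dualCode_eq_orthogonal (S : Submodule (ZMod 2) (Fin n → ZMod 2)) :
    dualCode S = LinearMap.BilinForm.orthogonal (dotProductBilin (ZMod 2) (ZMod 2)) S :=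
  rfl

theorem dualCode_dualCode (S : Submodule (ZMod 2) (Fin n → ZMod 2)) :
    dualCode (dualCode S) = S := by
  rw [dualCode_eq_orthogonal, dualCode_eq_orthogonal]
  exact LinearMap.BilinForm.orthogonal_orthogonal dotProductBilin_nondegenerate
    dotProductBilin_isRefl S

theorem dualCode_sup (S T : Submodule (ZMod 2) (Fin n → ZMod 2)) :
    dualCode (S ⊔ T) = dualCode S ⊓ dualCode T := by
  ext v
  refine ⟨fun hv => ⟨fun u hu => hv u (Submodule.mem_sup_left hu),
    fun u hu => hv u (Submodule.mem_sup_right hu)⟩, ?_⟩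
  rintro ⟨hS, hT⟩ u hu
  obtain ⟨s, hs, t, ht, rfl⟩ := Submodule.mem_sup.mp hu
  rw [add_dotProduct, hS s hs, hT t ht, add_zero]

theorem eq_inf_dualCode_of_dualCode_eq_sup {C D T : Submodule (ZMod 2) (Fin n → ZMod 2)}
    (h : dualCode D = dualCode C ⊔ T) : D = C ⊓ dualCode T := by
  rw [← dualCode_dualCode D, h, dualCode_sup, dualCode_dualCode]

theorem dualCode_span_rows {k : ℕ} (B : Matrix (Fin k) (Fin n) (ZMod 2)) :
    dualCode (Submodule.span (ZMod 2) (Set.range B.row)) = LinearMap.ker B.mulVecLin := by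
  ext v
  simp only [LinearMap.mem_ker, mulVecLin_apply, funext_iff, mulVec, Pi.zero_apply]
  refine ⟨fun hv i => hv _ (Submodule.subset_span ⟨i, rfl⟩), fun hv u hu => ?_⟩
  induction hu using Submodule.span_induction with
  | mem x hx => obtain ⟨i, rfl⟩ := hx; exact hv i
  | zero => exact zero_dotProduct v
  | add x y _ _ hx hy => rw [add_dotProduct, hx, hy, add_zero]
  | smul c x _ hx => rw [smul_dotProduct, hx, smul_zero]

end DualCode

theorem mirrored_ABt_invertible_general {n k : ℕ}
    (C1 C2perp : Submodule (ZMod 2) (Fin n → ZMod 2))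
    (A B : Matrix (Fin k) (Fin n) (ZMod 2))
    (hA : LinearIndependent (ZMod 2) (fun i => A i))
    (h1 : C1 = C2perp ⊔ Submodule.span (ZMod 2) (Set.range (fun i => A i)))
    (hint1 : C2perp ⊓ Submodule.span (ZMod 2) (Set.range (fun i => A i)) = ⊥)
    (h3 : dualCode C2perp = dualCode C1 ⊔ Submodule.span (ZMod 2) (Set.range (fun i => B i))) :
    IsUnit (A * B.transpose) := by
  have hC2perp := eq_inf_dualCode_of_dualCode_eq_sup h3
  have hAC1 : Submodule.span (ZMod 2) (Set.range A.row) ≤ C1 := h1 ▸ le_sup_right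
  refine isUnit_mul_transpose_of_disjoint hA ?_
  rw [← dualCode_span_rows, disjoint_iff_inf_le, ← hint1, hC2perp]
  exact le_inf (le_inf (inf_le_left.trans hAC1) inf_le_right) inf_le_left

/-- for mirrored CSS codes (`C4perp = C1⊥`, `C3 = C2`) with coset-representative
matrices `A` and `B`, the `k × k` matrix `U = A * Bᵀ` over `F_2` is invertible. -/
theorem mirrored_ABt_invertible {n k : ℕ}
    (C1 C2perp : Submodule (ZMod 2) (Fin n → ZMod 2))
    (h21 : C2perp ≤ C1)
    (A B : Matrix (Fin k) (Fin n) (ZMod 2))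
    (hA : LinearIndependent (ZMod 2) (fun i => A i))
    (hB : LinearIndependent (ZMod 2) (fun i => B i))
    (h1 : C1 = C2perp ⊔ Submodule.span (ZMod 2) (Set.range (fun i => A i)))
    (hint1 : C2perp ⊓ Submodule.span (ZMod 2) (Set.range (fun i => A i)) = ⊥)
    (h3 : dualCode C2perp = dualCode C1 ⊔ Submodule.span (ZMod 2) (Set.range (fun i => B i)))
    (hint3 : dualCode C1 ⊓ Submodule.span (ZMod 2) (Set.range (fun i => B i)) = ⊥) :
    IsUnit (A * B.transpose) :=
  mirrored_ABt_invertible_general C1 C2perp A B hA h1 hint1 h3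
end
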